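/- Let k, l, m ≥ 1 and let α: [l] → [k] and β: [m] → [k] be epimorphisms of finite reflexive linear graphs. Color a cell (i,j) of the chessboard [l]×[m] black iff α(i) = β(j). Then every 4-path from {1}×[m] to {l}×[m] contains a black cell, and every 4-path from [l]×{1} to [l]×{m} contains a black cell. -/
import Mathlib


/-- `φ` is an epimorphism of finite reflexive linear graphs from `[l] = {1,…,l}`
onto `[k] = {1,…,k}`. -/
def IsLinEpi (l k : ℕ) (φ : ℕ → ℕ) : Prop :=
  (∀ x ∈ Finset.Icc 1 l, φ x ∈ Finset.Icc 1 k) ∧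
  (∀ a ∈ Finset.Icc 1 k, ∃ x ∈ Finset.Icc 1 l, φ x = a) ∧
  (∀ x ∈ Finset.Icc 1 l, ∀ y ∈ Finset.Icc 1 l,
    Nat.dist x y ≤ 1 → Nat.dist (φ x) (φ y) ≤ 1) ∧
  (∀ a ∈ Finset.Icc 1 k, ∀ b ∈ Finset.Icc 1 k, Nat.dist a b ≤ 1 →
    ∃ x ∈ Finset.Icc 1 l, ∃ y ∈ Finset.Icc 1 l,
      Nat.dist x y ≤ 1 ∧ φ x = a ∧ φ y = b)

/-- The chessboard `[l] × [m]`. -/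
def board (l m : ℕ) : Set (ℕ × ℕ) :=
  {c | 1 ≤ c.1 ∧ c.1 ≤ l ∧ 1 ≤ c.2 ∧ c.2 ≤ m}

/-- 4-adjacency of cells. -/
def adj4 (c d : ℕ × ℕ) : Prop :=
  c ≠ d ∧ ((c.1 = d.1 ∧ Nat.dist c.2 d.2 ≤ 1) ∨ (c.2 = d.2 ∧ Nat.dist c.1 d.1 ≤ 1))

lemma natdist_int {x y : ℕ} (h : Nat.dist x y ≤ 1) : |(x : ℤ) - y| ≤ 1 := by
  simp [Nat.dist] at h
  rw [abs_le]
  omega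

/-- Discrete intermediate value theorem. -/
lemma discrete_ivt (f : ℕ → ℕ) (L c : ℕ)
    (hlip : ∀ i < L, Nat.dist (f i) (f (i + 1)) ≤ 1)
    (h0 : f 0 ≤ c) (hL : c ≤ f L) : ∃ i ≤ L, f i = c := by
  induction L with
  | zero => exact ⟨0, le_refl _, le_antisymm h0 hL⟩
  | succ n ih =>
    by_cases h : c ≤ f n
    · obtain ⟨i, hi, he⟩ := ih (fun i hi => hlip i (hi.trans n.lt_succ_self)) h
      exact ⟨i, hi.trans n.le_succ, he⟩
    · push_neg at h
      have hd := hlip n n.lt_succ_self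
      simp [Nat.dist] at hd
      exact ⟨n + 1, le_refl _, by omega⟩

/-- Sign constancy for never-vanishing integer sequences with steps of size ≤ 1. -/
lemma sign_const (g : ℕ → ℤ) (L : ℕ) (hne : ∀ i ≤ L, g i ≠ 0)
    (hlip : ∀ i < L, |g (i + 1) - g i| ≤ 1) (h0 : 0 < g 0) :
    ∀ i ≤ L, 0 < g i := by
  intro i hi
  induction i with
  | zero => exact h0
  | succ n ih =>
    have hn := ih (Nat.le_of_succ_le hi)
    have h1 := abs_le.mp (hlip n (Nat.lt_of_succ_le hi))
    have h2 := hne (n + 1) hi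
    omega

/-- Main crossing lemma: a 4-path from the left edge to the right edge
meets a black cell. -/
lemma cross (k l m : ℕ) (α β : ℕ → ℕ)
    (hαr : ∀ x ∈ Finset.Icc 1 l, α x ∈ Finset.Icc 1 k)
    (hβr : ∀ x ∈ Finset.Icc 1 m, β x ∈ Finset.Icc 1 k)
    (hαs : ∀ a ∈ Finset.Icc 1 k, ∃ x ∈ Finset.Icc 1 l, α x = a)
    (hαL : ∀ x ∈ Finset.Icc 1 l, ∀ y ∈ Finset.Icc 1 l,
      Nat.dist x y ≤ 1 → Nat.dist (α x) (α y) ≤ 1)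
    (hβL : ∀ x ∈ Finset.Icc 1 m, ∀ y ∈ Finset.Icc 1 m,
      Nat.dist x y ≤ 1 → Nat.dist (β x) (β y) ≤ 1)
    (hk : 1 ≤ k)
    (L : ℕ) (σ : ℕ → ℕ × ℕ)
    (hb : ∀ i ≤ L, σ i ∈ board l m) (hadj2 : ∀ i < L, adj4 (σ i) (σ (i + 1)))
    (h0 : (σ 0).1 = 1) (hL : (σ L).1 = l) :
    ∃ i ≤ L, α (σ i).1 = β (σ i).2 := by
  by_contra hcon
  push_neg at hcon
  -- membership facts
  have hmemα : ∀ i ≤ L, (σ i).1 ∈ Finset.Icc 1 l := by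
    intro i hi
    obtain ⟨h1, h2, h3, h4⟩ := hb i hi
    exact Finset.mem_Icc.mpr ⟨h1, h2⟩
  have hmemβ : ∀ i ≤ L, (σ i).2 ∈ Finset.Icc 1 m := by
    intro i hi
    obtain ⟨h1, h2, h3, h4⟩ := hb i hi
    exact Finset.mem_Icc.mpr ⟨h3, h4⟩
  set g : ℕ → ℤ := fun i => (α (σ i).1 : ℤ) - (β (σ i).2 : ℤ) with hg
  have hne : ∀ i ≤ L, g i ≠ 0 := by
    intro i hi h
    simp only [hg] at h
    exact hcon i hi (by omega)
  have hlip : ∀ i < L, |g (i + 1) - g i| ≤ 1 := by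
    intro i hi
    obtain ⟨_, hc | hc⟩ := hadj2 i hi
    · have := hβL _ (hmemβ i hi.le) _ (hmemβ (i + 1) hi)
        hc.2
      have h1 := natdist_int this
      simp only [hg, hc.1]
      rw [abs_sub_comm] at h1
      calc |((α (σ (i+1)).1 : ℤ) - β (σ (i+1)).2) - ((α (σ (i+1)).1 : ℤ) - β (σ i).2)|
          = |(β (σ i).2 : ℤ) - β (σ (i+1)).2| := by ring_nf
        _ ≤ 1 := by rw [abs_sub_comm]; exact h1
    · have := hαL _ (hmemα i hi.le) _ (hmemα (i + 1) hi) hc.2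
      have h1 := natdist_int this
      simp only [hg, hc.1]
      calc |((α (σ (i+1)).1 : ℤ) - β (σ (i+1)).2) - ((α (σ i).1 : ℤ) - β (σ (i+1)).2)|
          = |(α (σ (i+1)).1 : ℤ) - α (σ i).1| := by ring_nf
        _ ≤ 1 := by rw [abs_sub_comm]; exact h1
  -- the first coordinate is 1-Lipschitz along the path
  have hflip : ∀ i < L, Nat.dist (σ i).1 (σ (i + 1)).1 ≤ 1 := by
    intro i hi
    obtain ⟨_, hc | hc⟩ := hadj2 i hi
    · rw [hc.1]; simp [Nat.dist]
    · exact hc.2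
  -- hitting a given column
  have hit : ∀ x ∈ Finset.Icc 1 l, ∃ i ≤ L, (σ i).1 = x := by
    intro x hx
    rw [Finset.mem_Icc] at hx
    refine discrete_ivt (fun i => (σ i).1) L x hflip ?_ ?_
    · show (σ 0).1 ≤ x; omega
    · show x ≤ (σ L).1; omega
  rcases lt_trichotomy (g 0) 0 with hneg | hzero | hpos
  · -- g always negative; hit a column where α = k
    have hall : ∀ i ≤ L, 0 < -g i := by
      have := sign_const (fun i => -g i) L (fun i hi => by simpa using hne i hi)
        (fun i hi => by
          have := hlip i hi
          rw [show -g (i+1) - -g i = -(g (i+1) - g i) by ring, abs_neg]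
          exact this)
        (by simpa using hneg)
      exact this
    obtain ⟨x, hx, hxk⟩ := hαs k (Finset.mem_Icc.mpr ⟨hk, le_refl _⟩)
    obtain ⟨i, hi, hix⟩ := hit x hx
    have h1 := hall i hi
    have h2 := Finset.mem_Icc.mp (hβr _ (hmemβ i hi))
    simp only [hg, hix, hxk] at h1
    omega
  · exact hne 0 (Nat.zero_le L) hzero
  · -- g always positive; hit a column where α = 1
    have hall := sign_const g L hne hlip hpos
    obtain ⟨x, hx, hx1⟩ := hαs 1 (Finset.mem_Icc.mpr ⟨le_refl _, hk⟩)
    obtain ⟨i, hi, hix⟩ := hit x hx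
    have h1 := hall i hi
    have h2 := Finset.mem_Icc.mp (hβr _ (hmemβ i hi))
    simp only [hg, hix, hx1] at h1
    omega

/-- For epimorphisms `α : [l] → [k]` and `β : [m] → [k]` of finite reflexive
linear graphs, coloring `(i,j)` black iff `α i = β j`: every 4-path in `[l]×[m]`
from `{1}×[m]` to `{l}×[m]` contains a black cell, and every 4-path from
`[l]×{1}` to `[l]×{m}` contains a black cell. -/
theorem four_paths_meet_black (k l m : ℕ) (hk : 1 ≤ k) (hl : 1 ≤ l) (hm : 1 ≤ m)
    (α β : ℕ → ℕ) (hα : IsLinEpi l k α) (hβ : IsLinEpi m k β) :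
    (∀ (L : ℕ) (σ : ℕ → ℕ × ℕ),
      (∀ i ≤ L, σ i ∈ board l m) → (∀ i < L, adj4 (σ i) (σ (i + 1))) →
      (σ 0).1 = 1 → (σ L).1 = l → ∃ i ≤ L, α (σ i).1 = β (σ i).2) ∧
    (∀ (L : ℕ) (σ : ℕ → ℕ × ℕ),
      (∀ i ≤ L, σ i ∈ board l m) → (∀ i < L, adj4 (σ i) (σ (i + 1))) →
      (σ 0).2 = 1 → (σ L).2 = m → ∃ i ≤ L, α (σ i).1 = β (σ i).2) := by
  obtain ⟨hαr, hαs, hαL, _⟩ := hα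
  obtain ⟨hβr, hβs, hβL, _⟩ := hβ
  constructor
  · intro L σ hb hadj h0 hL
    exact cross k l m α β hαr hβr hαs hαL hβL hk L σ hb hadj h0 hL
  · intro L σ hb hadj h0 hL
    -- swap coordinates and roles of α, β
    have key := cross k m l β α hβr hαr hβs hβL hαL hk L
      (fun i => ((σ i).2, (σ i).1))
      (by
        intro i hi
        obtain ⟨h1, h2, h3, h4⟩ := hb i hi
        exact ⟨h3, h4, h1, h2⟩)
      (by
        intro i hi
        obtain ⟨hne, hc | hc⟩ := hadj i hi
        · exact ⟨fun h => hne (Prod.ext (congrArg Prod.snd h) (congrArg Prod.fst h)),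
            Or.inr ⟨hc.1, hc.2⟩⟩
        · exact ⟨fun h => hne (Prod.ext (congrArg Prod.snd h) (congrArg Prod.fst h)),
            Or.inl ⟨hc.1, hc.2⟩⟩)
      h0 hL
    obtain ⟨i, hi, he⟩ := key
    exact ⟨i, hi, he.symm⟩
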